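/- arXiv:2001.04300 — 4 statements merged into one kernel-verified Lean document; each statement's English description precedes it below -/
import Mathlib

section
/- (Hex Theorem of Gale) For any discrete box K of dimension n and any cover F of K with |F| ≤ n, some member of F connects two opposite faces of K. -/
/-- In the discrete box `∀ i, Fin (k i)` with the sup-metric
`d(x,y) = max_i |x i - y i|`, the relation `d(x,y) ≤ 1`. -/
def adj {n : ℕ} {k : Fin n → ℕ} (x y : ∀ i, Fin (k i)) : Prop :=
  ∀ i, |(x i : ℤ) - (y i : ℤ)| ≤ 1

/-- A subset `F` of the discrete box connects two opposite faces: for some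
coordinate `i` there is a chain in `F` with consecutive distances `≤ 1`
from the face `x i = 0` to the face `x i = k i - 1`. -/
def Connects {n : ℕ} {k : Fin n → ℕ} (F : Set (∀ i, Fin (k i))) : Prop :=
  ∃ i : Fin n, ∃ m : ℕ, ∃ c : Fin (m + 1) → ∀ j, Fin (k j),
    (∀ j, c j ∈ F) ∧ (c 0 i : ℕ) = 0 ∧ (c (Fin.last m) i : ℕ) = k i - 1 ∧
    ∀ j : Fin m, adj (c j.castSucc) (c j.succ)

/-!
Inject the cover into the `n` directions and label each point `x` by `(i, b)`, where `i` is the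
direction of the member `F` chosen to contain `x` and `b` says whether `x` is joined inside `F` to
the face `x i = k i - 1`. If no member connects opposite faces, no point of the face `x i = 0` is
labelled `(i, true)`, no point of the face `x i = k i - 1` is labelled `(i, false)`, and no two
neighbours are labelled `(i, false)` and `(i, true)`.

No such labelling exists, by Sperner's door counting on Kuhn's triangulation of the box. Call a
Kuhn `p`-simplex with directions `σ 0, …, σ (p - 1)`, lying in the coordinate face these span,
fully labelled if its labels are the `(σ s, false)` and one further `(d, false)`. Among the
`(p + 1)`-simplices, those with an odd number of doors (facets labelled exactly by the
`(σ s, false)`) are the fully labelled ones: a label `(d, true)` next to the doors' labels is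
excluded by the neighbour condition if `d` is a direction of the simplex and by the bottom
condition otherwise. Pivoting across a door pairs the doors off, except those lying in the face
`x (σ p) = 0`, which are the fully labelled `p`-simplices; the top condition keeps the pivots inside
the box. Hence the number of fully labelled `p`-simplices has the same parity for all `p`. It is
`1` for `p = 0` (the origin) and `0` for `p = n`, as there is no further direction.
-/

namespace GaleHex

open Finset Function

section Parity

variable {ι β : Type*} [DecidableEq ι] [DecidableEq β] {I : Finset ι} {T : Finset β} {g : ι → β}

theorem image_eq_insert_of_image_erase_eq {j : ι} (hj : j ∈ I) (h : (I.erase j).image g = T) :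
    I.image g = insert (g j) T := by
  rw [← insert_erase hj, image_insert, h]

theorem card_filter_image_erase_eq_of_image_eq_insert (hI : #I = #T + 1) {c : β} (hc : c ∉ T)
    (h : I.image g = insert c T) : #{j ∈ I | (I.erase j).image g = T} = 1 := by
  have hinj : Set.InjOn g I := card_image_iff.1 (by rw [h, card_insert_of_notMem hc, hI])
  obtain ⟨j, hjI, rfl⟩ := mem_image.1 (h ▸ mem_insert_self c T)
  refine card_eq_one.2 ⟨j, ext fun i => ?_⟩
  simp only [mem_filter, mem_singleton]
  constructor
  · rintro ⟨hiI, hi⟩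
    by_contra hij
    have : g j ∈ (I.erase i).image g := mem_image_of_mem g (mem_erase.2 ⟨Ne.symm hij, hjI⟩)
    exact hc (hi ▸ this)
  · rintro rfl
    refine ⟨hjI, ?_⟩
    rw [← erase_insert hc, ← h]
    ext b
    simp only [mem_image, mem_erase]
    constructor
    · rintro ⟨a, ⟨hai, haI⟩, rfl⟩
      exact ⟨fun hb => hai (hinj haI hjI hb), a, haI, rfl⟩
    · rintro ⟨hb, a, haI, rfl⟩
      exact ⟨a, ⟨fun hai => hb (hai ▸ rfl), haI⟩, rfl⟩

theorem card_filter_image_erase_eq_of_image_eq (hI : #I = #T + 1) (h : I.image g = T) :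
    #{j ∈ I | (I.erase j).image g = T} = 2 := by
  obtain ⟨a, haI, b, hbI, hab, hgab⟩ := exists_ne_map_eq_of_card_lt_of_maps_to (t := T)
    (by omega) (fun i hi => h ▸ mem_image_of_mem g hi)
  have hfacet : ∀ a b, a ∈ I → b ∈ I → a ≠ b → g a = g b → (I.erase a).image g = T := by
    intro a b haI hbI hab hgab
    refine (image_subset_image (erase_subset a I)).trans_eq h |>.antisymm fun t ht => ?_
    obtain ⟨i, hiI, rfl⟩ := mem_image.1 (h ▸ ht)
    by_cases hia : i = a
    · exact mem_image.2 ⟨b, mem_erase.2 ⟨Ne.symm hab, hbI⟩, hia ▸ hgab.symm⟩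
    · exact mem_image_of_mem g (mem_erase.2 ⟨hia, hiI⟩)
  rw [← card_pair hab]
  congr 1
  ext j
  simp only [mem_filter, mem_insert, mem_singleton]
  constructor
  · rintro ⟨hjI, hj⟩
    by_contra! hjab
    have hinj : Set.InjOn g (I.erase j) := card_image_iff.1 (by
      rw [hj, card_erase_of_mem hjI]; omega)
    exact hab (hinj (mem_erase.2 ⟨hjab.1.symm, haI⟩) (mem_erase.2 ⟨hjab.2.symm, hbI⟩) hgab)
  · rintro (rfl | rfl)
    · exact ⟨haI, hfacet j b haI hbI hab hgab⟩
    · exact ⟨hbI, hfacet j a hbI haI (Ne.symm hab) hgab.symm⟩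

-- Door counting in a single room of Sperner's lemma.
theorem odd_card_filter_image_erase_eq_iff (hI : #I = #T + 1) :
    Odd #{j ∈ I | (I.erase j).image g = T} ↔ ∃ c ∉ T, I.image g = insert c T := by
  constructor
  · intro hodd
    obtain ⟨j, hj⟩ := card_pos.1 hodd.pos
    rw [mem_filter] at hj
    have himg := image_eq_insert_of_image_erase_eq hj.1 hj.2
    by_cases hjT : g j ∈ T
    · rw [insert_eq_of_mem hjT] at himg
      rw [card_filter_image_erase_eq_of_image_eq hI himg] at hodd
      exact absurd hodd (by decide)
    · exact ⟨g j, hjT, himg⟩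
  · rintro ⟨c, hc, h⟩
    rw [card_filter_image_erase_eq_of_image_eq_insert hI hc h]
    exact odd_one

theorem even_card_of_involution {α : Type*} {s : Finset α} (g : α → α) (hmem : ∀ a ∈ s, g a ∈ s)
    (hinv : ∀ a ∈ s, g (g a) = a) (hne : ∀ a ∈ s, g a ≠ a) : Even #s := by
  rw [← ZMod.natCast_eq_zero_iff_even, card_eq_sum_ones, Nat.cast_sum, Nat.cast_one]
  exact sum_involution (fun a _ => g a) (fun _ _ => by decide) (fun a ha _ => hne a ha) hmem hinv

end Parity

section Kuhn

variable {n p : ℕ} {k : Fin n → ℕ}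

def box (k : Fin n → ℕ) : Finset (Fin n → ℕ) := Fintype.piFinset fun i => range (k i)

lemma mem_box {x : Fin n → ℕ} : x ∈ box k ↔ ∀ i, x i < k i := by
  simp [box]

def Near (x y : Fin n → ℕ) : Prop := ∀ i, x i ≤ y i + 1 ∧ y i ≤ x i + 1

-- `(x, σ)` stands for the simplex with vertices `x + e (σ 0) + ⋯ + e (σ (t - 1))`, `t ≤ p`.
abbrev Simplex (n p : ℕ) := (Fin n → ℕ) × (Fin p → Fin n)

def vertex (S : Simplex n p) (t : ℕ) : Fin n → ℕ :=
  fun d => S.1 d + if ∃ s : Fin p, (s : ℕ) < t ∧ S.2 s = d then 1 else 0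

structure IsKuhnSimplex (k : Fin n → ℕ) (S : Simplex n p) : Prop where
  injective : Injective S.2
  base_mem_box : S.1 ∈ box k
  succ_lt : ∀ d ∈ Set.range S.2, S.1 d + 1 < k d
  -- the simplex lies in the coordinate face spanned by its directions
  eq_zero : ∀ d ∉ Set.range S.2, S.1 d = 0

lemma le_vertex_apply (S : Simplex n p) (t : ℕ) (d : Fin n) : S.1 d ≤ vertex S t d :=
  Nat.le_add_right _ _

lemma vertex_apply_le (S : Simplex n p) (t : ℕ) (d : Fin n) : vertex S t d ≤ S.1 d + 1 := by
  unfold vertex; split_ifs <;> omega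

lemma near_vertex (S : Simplex n p) (t t' : ℕ) : Near (vertex S t) (vertex S t') := fun d => by
  have := le_vertex_apply S t d; have := vertex_apply_le S t d
  have := le_vertex_apply S t' d; have := vertex_apply_le S t' d
  omega

lemma vertex_apply_of_notMem_range {S : Simplex n p} {d : Fin n} (hd : d ∉ Set.range S.2)
    (t : ℕ) : vertex S t d = S.1 d := by
  simp only [vertex, add_eq_left, ite_eq_right_iff]
  rintro ⟨s, -, rfl⟩
  exact absurd ⟨s, rfl⟩ hd

lemma vertex_zero (S : Simplex n p) : vertex S 0 = S.1 := by
  ext d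
  simp [vertex]

lemma vertex_apply_of_lt {S : Simplex n p} {s : Fin p} {t : ℕ} (hs : (s : ℕ) < t) :
    vertex S t (S.2 s) = S.1 (S.2 s) + 1 := by
  simp only [vertex, if_pos (⟨s, hs, rfl⟩ : ∃ s' : Fin p, (s' : ℕ) < t ∧ S.2 s' = S.2 s)]

lemma IsKuhnSimplex.vertex_mem_box {S : Simplex n p} (hS : IsKuhnSimplex k S) (t : ℕ) :
    vertex S t ∈ box k := by
  refine mem_box.2 fun d => ?_
  by_cases hd : d ∈ Set.range S.2
  · have := vertex_apply_le S t d; have := hS.succ_lt d hd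
    omega
  · rw [vertex_apply_of_notMem_range hd]
    exact mem_box.1 hS.base_mem_box d

lemma range_eq_insert_init (σ : Fin (p + 1) → Fin n) :
    Set.range σ = insert (σ (Fin.last p)) (Set.range (Fin.init σ)) := by
  conv_lhs => rw [← Fin.snoc_init_self σ, Fin.range_snoc]

lemma vertex_init (S : Simplex n (p + 1)) {t : ℕ} (ht : t ≤ p) :
    vertex (S.1, Fin.init S.2) t = vertex S t := by
  ext d
  simp only [vertex, Fin.init, Fin.exists_fin_succ' (P := fun s => (s : ℕ) < t ∧ S.2 s = d),
    Fin.val_castSucc, Fin.val_last, show ¬p < t by omega, false_and, or_false]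
  rfl

lemma IsKuhnSimplex.init {S : Simplex n (p + 1)} (hS : IsKuhnSimplex k S)
    (h : S.1 (S.2 (Fin.last p)) = 0) : IsKuhnSimplex k (S.1, Fin.init S.2) := by
  have hrange := range_eq_insert_init S.2
  refine ⟨hS.injective.comp (Fin.castSucc_injective _), hS.base_mem_box,
    fun d hd => hS.succ_lt d (hrange ▸ Set.mem_insert_of_mem _ hd), fun d hd => ?_⟩
  by_cases hdl : d = S.2 (Fin.last p)
  · exact hdl ▸ h
  · exact hS.eq_zero d (hrange ▸ fun h => (Set.mem_insert_iff.1 h).elim hdl hd)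

lemma IsKuhnSimplex.snoc {S : Simplex n p} (hS : IsKuhnSimplex k S) {d : Fin n}
    (hd : d ∉ Set.range S.2) (hk : 1 < k d) : IsKuhnSimplex k (S.1, Fin.snoc S.2 d) := by
  refine ⟨Fin.snoc_injective_of_injective hS.injective hd, hS.base_mem_box, fun d' hd' => ?_,
    fun d' hd' => ?_⟩
  · rw [Fin.range_snoc] at hd'
    rcases hd' with rfl | hd'
    · rw [hS.eq_zero d' hd]
      exact hk
    · exact hS.succ_lt d' hd'
  · rw [Fin.range_snoc] at hd'
    exact hS.eq_zero d' fun h => hd' (Set.mem_insert_of_mem _ h)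

lemma vertex_comp_perm (S : Simplex n p) {t : ℕ} {π : Equiv.Perm (Fin p)}
    (hπ : ∀ s, (π s : ℕ) < t ↔ (s : ℕ) < t) : vertex (S.1, S.2 ∘ π) t = vertex S t := by
  ext d
  have : (∃ s : Fin p, (s : ℕ) < t ∧ S.2 (π s) = d) ↔ ∃ s : Fin p, (s : ℕ) < t ∧ S.2 s = d :=
    ⟨fun ⟨s, hs, h⟩ => ⟨π s, (hπ s).2 hs, h⟩,
      fun ⟨s, hs, h⟩ => ⟨π.symm s, (hπ _).1 (by simpa using hs), by simpa using h⟩⟩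
  simp only [vertex, comp_apply, this]

lemma IsKuhnSimplex.comp_perm {S : Simplex n p} (hS : IsKuhnSimplex k S) (π : Equiv.Perm (Fin p)) :
    IsKuhnSimplex k (S.1, S.2 ∘ π) := by
  have hrange : Set.range (S.2 ∘ π) = Set.range S.2 := π.surjective.range_comp S.2
  exact ⟨hS.injective.comp π.injective, hS.base_mem_box, hrange ▸ hS.succ_lt, hrange ▸ hS.eq_zero⟩

def pivotZero (S : Simplex n (p + 1)) : Simplex n (p + 1) :=
  (S.1 + Pi.single (S.2 0) 1, Fin.snoc (Fin.tail S.2) (S.2 0))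

def pivotLast (S : Simplex n (p + 1)) : Simplex n (p + 1) :=
  (S.1 - Pi.single (S.2 (Fin.last p)) 1, Fin.cons (S.2 (Fin.last p)) (Fin.init S.2))

def pivotMid (S : Simplex n (p + 1)) (j : ℕ) : Simplex n (p + 1) :=
  (S.1, S.2 ∘ Equiv.swap (Fin.ofNat (p + 1) (j - 1)) (Fin.ofNat (p + 1) j))

-- The other simplex through the facet opposite vertex `j`.
def pivot (q : Simplex n (p + 1) × ℕ) : Simplex n (p + 1) × ℕ :=
  if q.2 = 0 then (pivotZero q.1, p + 1)
  else if q.2 = p + 1 then (pivotLast q.1, 0)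
  else (pivotMid q.1 q.2, q.2)

lemma range_pivotZero (S : Simplex n (p + 1)) : Set.range (pivotZero S).2 = Set.range S.2 := by
  rw [pivotZero, Fin.range_snoc, Fin.range_fin_succ S.2]

lemma range_pivotLast (S : Simplex n (p + 1)) : Set.range (pivotLast S).2 = Set.range S.2 := by
  rw [pivotLast, Fin.range_cons, range_eq_insert_init S.2]

lemma pivotLast_pivotZero (S : Simplex n (p + 1)) : pivotLast (pivotZero S) = S := by
  ext d <;> simp [pivotLast, pivotZero]

lemma pivotZero_pivotLast {S : Simplex n (p + 1)} (h : S.1 (S.2 (Fin.last p)) ≠ 0) :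
    pivotZero (pivotLast S) = S := by
  ext d
  · simp only [pivotZero, pivotLast, Fin.cons_zero, Pi.add_apply, Pi.sub_apply, Pi.single_apply]
    split_ifs with hd
    · subst hd; omega
    · omega
  · simp [pivotZero, pivotLast]

lemma pivotMid_pivotMid (S : Simplex n (p + 1)) (j : ℕ) : pivotMid (pivotMid S j) j = S := by
  ext d <;> simp [pivotMid]

lemma pivotMid_ne {S : Simplex n (p + 1)} (hS : Injective S.2) {j : ℕ} (hj : 1 ≤ j) (hjp : j ≤ p) :
    pivotMid S j ≠ S := by
  intro h
  have hne : Fin.ofNat (p + 1) (j - 1) ≠ Fin.ofNat (p + 1) j := by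
    simp only [ne_eq, Fin.ext_iff, Fin.val_ofNat, Nat.mod_eq_of_lt (show j - 1 < p + 1 by omega),
      Nat.mod_eq_of_lt (show j < p + 1 by omega)]
    omega
  have := congrFun (congrArg Prod.snd h) (Fin.ofNat (p + 1) (j - 1))
  simp only [pivotMid, comp_apply, Equiv.swap_apply_left] at this
  exact hne (hS this).symm

lemma vertex_pivotZero {S : Simplex n (p + 1)} (hS : Injective S.2) {t : ℕ} (ht : t ≤ p) :
    vertex (pivotZero S) t = vertex S (t + 1) := by
  ext d
  simp only [vertex, pivotZero, Pi.add_apply, Pi.single_apply,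
    Fin.exists_fin_succ' (P := fun s => (s : ℕ) < t ∧ _ = d),
    Fin.exists_fin_succ (P := fun s => (s : ℕ) < t + 1 ∧ S.2 s = d), Fin.snoc_castSucc,
    Fin.snoc_last, Fin.tail, Fin.val_castSucc, Fin.val_last, Fin.val_succ, Fin.val_zero]
  have hne : ∀ i : Fin p, S.2 i.succ ≠ S.2 0 := fun i h => Fin.succ_ne_zero i (hS h)
  simp only [show ¬p < t by omega, false_and, or_false, Nat.add_lt_add_iff_right,
    Nat.zero_lt_succ, true_and]
  by_cases hd : d = S.2 0
  · subst hd
    simp [hne]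
  · simp [hd, Ne.symm hd]

lemma vertex_pivotMid (S : Simplex n (p + 1)) {j t : ℕ} (hj : 1 ≤ j) (hjp : j ≤ p) (ht : t ≠ j) :
    vertex (pivotMid S j) t = vertex S t := by
  refine vertex_comp_perm S fun s => ?_
  have ha : (Fin.ofNat (p + 1) (j - 1) : ℕ) = j - 1 := Nat.mod_eq_of_lt (by omega)
  have hb : (Fin.ofNat (p + 1) j : ℕ) = j := Nat.mod_eq_of_lt (by omega)
  rw [Equiv.swap_apply_def]
  split_ifs with h1 h2 <;> subst_vars <;> omega

lemma IsKuhnSimplex.pivotZero {S : Simplex n (p + 1)} (hS : IsKuhnSimplex k S)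
    (h : S.1 (S.2 0) + 2 < k (S.2 0)) : IsKuhnSimplex k (pivotZero S) := by
  have hx : ∀ d, (GaleHex.pivotZero S).1 d = S.1 d + if d = S.2 0 then 1 else 0 := fun d => by
    simp [GaleHex.pivotZero, Pi.single_apply]
  refine ⟨?_, mem_box.2 fun d => ?_, fun d hd => ?_, fun d hd => ?_⟩
  · refine Fin.snoc_injective_of_injective (hS.injective.comp (Fin.succ_injective _)) ?_
    rintro ⟨i, hi⟩
    exact Fin.succ_ne_zero i (hS.injective hi)
  · have := mem_box.1 hS.base_mem_box d
    rw [hx]; split_ifs with hd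
    · subst hd; omega
    · omega
  · rw [range_pivotZero] at hd
    have := hS.succ_lt d hd
    rw [hx]; split_ifs with hd'
    · subst hd'; omega
    · omega
  · rw [range_pivotZero] at hd
    rw [hx, if_neg (fun h => hd ⟨0, h.symm⟩), hS.eq_zero d hd]

lemma IsKuhnSimplex.pivotLast {S : Simplex n (p + 1)} (hS : IsKuhnSimplex k S) :
    IsKuhnSimplex k (pivotLast S) := by
  have hx : ∀ d, (GaleHex.pivotLast S).1 d ≤ S.1 d := fun d => by
    simp [GaleHex.pivotLast]
  refine ⟨?_, mem_box.2 fun d => ?_, fun d hd => ?_, fun d hd => ?_⟩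
  · refine Fin.cons_injective_of_injective ?_ (hS.injective.comp (Fin.castSucc_injective _))
    rintro ⟨i, hi⟩
    exact Fin.castSucc_ne_last i (hS.injective hi)
  · exact (hx d).trans_lt (mem_box.1 hS.base_mem_box d)
  · rw [range_pivotLast] at hd
    exact (Nat.add_le_add_right (hx d) 1).trans_lt (hS.succ_lt d hd)
  · rw [range_pivotLast] at hd
    exact Nat.eq_zero_of_le_zero (hS.eq_zero d hd ▸ hx d)

end Kuhn

section Labeling

open scoped Classical

variable {n p : ℕ} {k : Fin n → ℕ} (ℓ : (Fin n → ℕ) → Fin n × Bool)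

def doorLabels (S : Simplex n p) : Finset (Fin n × Bool) := univ.image fun s => (S.2 s, false)

def IsDoor (S : Simplex n p) (j : ℕ) : Prop :=
  ((range (p + 1)).erase j).image (ℓ ∘ vertex S) = doorLabels S

def IsFullyLabeled (S : Simplex n p) : Prop :=
  ∃ d ∉ Set.range S.2, (range (p + 1)).image (ℓ ∘ vertex S) = insert (d, false) (doorLabels S)

-- The facet opposite the last vertex lies in the face `x (σ p) = 0`: it is a Kuhn `p`-simplex.
def IsBoundaryDoor (q : Simplex n (p + 1) × ℕ) : Prop :=
  q.2 = p + 1 ∧ q.1.1 (q.1.2 (Fin.last p)) = 0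

noncomputable def kuhnSimplices (k : Fin n → ℕ) (p : ℕ) : Finset (Simplex n p) :=
  (box k ×ˢ univ).filter (IsKuhnSimplex k)

noncomputable def doors (k : Fin n → ℕ) (p : ℕ) : Finset (Simplex n p × ℕ) :=
  (kuhnSimplices k p ×ˢ range (p + 1)).filter fun q => IsDoor ℓ q.1 q.2

noncomputable def fullyLabeled (k : Fin n → ℕ) (p : ℕ) : Finset (Simplex n p) :=
  (kuhnSimplices k p).filter (IsFullyLabeled ℓ)

noncomputable def boundaryDoors (k : Fin n → ℕ) (p : ℕ) : Finset (Simplex n (p + 1) × ℕ) :=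
  (doors ℓ k (p + 1)).filter IsBoundaryDoor

variable {ℓ}

lemma mem_kuhnSimplices {S : Simplex n p} : S ∈ kuhnSimplices k p ↔ IsKuhnSimplex k S := by
  simp only [kuhnSimplices, mem_filter, mem_product, mem_univ, and_true, and_iff_right_iff_imp]
  exact fun hS => hS.base_mem_box

lemma mem_doors {q : Simplex n p × ℕ} :
    q ∈ doors ℓ k p ↔ IsKuhnSimplex k q.1 ∧ q.2 < p + 1 ∧ IsDoor ℓ q.1 q.2 := by
  simp [doors, mem_kuhnSimplices, and_assoc]

lemma mem_doorLabels {S : Simplex n p} {c : Fin n × Bool} :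
    c ∈ doorLabels S ↔ c.1 ∈ Set.range S.2 ∧ c.2 = false := by
  obtain ⟨d, b⟩ := c
  simp [doorLabels, eq_comm]

lemma card_doorLabels {S : Simplex n p} (hS : Injective S.2) : #(doorLabels S) = p := by
  rw [doorLabels, card_image_of_injective _ fun _ _ h => hS (Prod.ext_iff.1 h).1, card_univ,
    Fintype.card_fin]

lemma odd_card_doors_iff (hbot : ∀ x ∈ box k, ∀ i, x i = 0 → ℓ x ≠ (i, true))
    (hnear : ∀ x ∈ box k, ∀ y ∈ box k, Near x y → ∀ i, ℓ x = (i, false) → ℓ y ≠ (i, true))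
    {S : Simplex n p} (hS : IsKuhnSimplex k S) :
    Odd #{j ∈ range (p + 1) | IsDoor ℓ S j} ↔ IsFullyLabeled ℓ S := by
  have hcard : #(range (p + 1)) = #(doorLabels S) + 1 := by
    rw [card_range, card_doorLabels hS.injective]
  have hparity : Odd #{j ∈ range (p + 1) | IsDoor ℓ S j} ↔
      ∃ c ∉ doorLabels S, (range (p + 1)).image (ℓ ∘ vertex S) = insert c (doorLabels S) := by
    convert odd_card_filter_image_erase_eq_iff hcard using 5
    rfl
  rw [hparity]
  refine ⟨fun ⟨⟨d, b⟩, hc, himg⟩ => ?_,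
    fun ⟨d, hd, himg⟩ => ⟨(d, false), fun h => hd (mem_doorLabels.1 h).1, himg⟩⟩
  have hmem : ∀ c ∈ insert (d, b) (doorLabels S), ∃ t, ℓ (vertex S t) = c := fun c hc => by
    obtain ⟨t, -, ht⟩ := mem_image.1 (himg ▸ hc)
    exact ⟨t, ht⟩
  obtain ⟨t, ht⟩ := hmem _ (mem_insert_self _ _)
  cases b with
  | false => exact ⟨d, fun hd => hc (mem_doorLabels.2 ⟨hd, rfl⟩), himg⟩
  | true =>
    exfalso
    by_cases hd : d ∈ Set.range S.2
    · obtain ⟨t', ht'⟩ := hmem (d, false) (mem_insert_of_mem (mem_doorLabels.2 ⟨hd, rfl⟩))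
      exact hnear _ (hS.vertex_mem_box t') _ (hS.vertex_mem_box t) (near_vertex S t' t) d ht' ht
    · refine hbot _ (hS.vertex_mem_box t) d ?_ ht
      rw [vertex_apply_of_notMem_range hd, hS.eq_zero d hd]

lemma card_doors_eq_card_fullyLabeled (hbot : ∀ x ∈ box k, ∀ i, x i = 0 → ℓ x ≠ (i, true))
    (hnear : ∀ x ∈ box k, ∀ y ∈ box k, Near x y → ∀ i, ℓ x = (i, false) → ℓ y ≠ (i, true))
    (p : ℕ) : (#(doors ℓ k p) : ZMod 2) = #(fullyLabeled ℓ k p) := by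
  simp only [doors, fullyLabeled, card_filter, sum_product, Nat.cast_sum]
  refine sum_congr rfl fun S hS => ?_
  rw [← Nat.cast_sum, ← card_filter]
  have := odd_card_doors_iff hbot hnear (mem_kuhnSimplices.1 hS)
  split_ifs with h
  · exact ZMod.natCast_eq_one_iff_odd.2 (this.2 h)
  · exact ZMod.natCast_eq_zero_iff_even.2 (Nat.not_odd_iff_even.1 (mt this.1 h))

lemma isDoor_pivotZero_iff {S : Simplex n (p + 1)} (hS : Injective S.2) :
    IsDoor ℓ (pivotZero S) (p + 1) ↔ IsDoor ℓ S 0 := by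
  have hlabels : doorLabels (pivotZero S) = doorLabels S := by
    ext c
    rw [mem_doorLabels, mem_doorLabels, range_pivotZero]
  have hfacet : ((range (p + 1 + 1)).erase (p + 1)).image (ℓ ∘ vertex (pivotZero S)) =
      ((range (p + 1 + 1)).erase 0).image (ℓ ∘ vertex S) := by
    ext c
    simp only [mem_image, mem_range, mem_erase, comp_apply]
    constructor
    · rintro ⟨t, ⟨htp, ht⟩, rfl⟩
      exact ⟨t + 1, ⟨by omega, by omega⟩, by rw [vertex_pivotZero hS (by omega)]⟩
    · rintro ⟨t, ⟨ht0, ht⟩, rfl⟩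
      refine ⟨t - 1, by omega, ?_⟩
      rw [vertex_pivotZero hS (by omega), Nat.sub_add_cancel (by omega)]
  rw [IsDoor, IsDoor, hfacet, hlabels]

lemma isDoor_pivotMid_iff {S : Simplex n (p + 1)} {j : ℕ} (hj : 1 ≤ j) (hjp : j ≤ p) :
    IsDoor ℓ (pivotMid S j) j ↔ IsDoor ℓ S j := by
  have hlabels : doorLabels (pivotMid S j) = doorLabels S := by
    ext c
    rw [mem_doorLabels, mem_doorLabels, pivotMid, (Equiv.surjective _).range_comp]
  have hfacet : ((range (p + 1 + 1)).erase j).image (ℓ ∘ vertex (pivotMid S j)) =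
      ((range (p + 1 + 1)).erase j).image (ℓ ∘ vertex S) :=
    image_congr fun t ht => by
      simp only [comp_apply, vertex_pivotMid S hj hjp (mem_erase.1 ht).1]
  rw [IsDoor, IsDoor, hfacet, hlabels]

lemma lt_of_isDoor_zero (htop : ∀ x ∈ box k, ∀ i, x i + 1 = k i → ℓ x ≠ (i, false))
    {S : Simplex n (p + 1)} (hS : IsKuhnSimplex k S) (h : IsDoor ℓ S 0) :
    S.1 (S.2 0) + 2 < k (S.2 0) := by
  -- `(σ 0, false)` labels a vertex with coordinate `x (σ 0) + 1` there, which is not the top.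
  obtain ⟨t, ht, hlabel⟩ := mem_image.1 (h ▸ mem_doorLabels.2 ⟨⟨0, rfl⟩, rfl⟩ :
    (S.2 0, false) ∈ ((range (p + 1 + 1)).erase 0).image (ℓ ∘ vertex S))
  have hv : vertex S t (S.2 0) = S.1 (S.2 0) + 1 :=
    vertex_apply_of_lt (Nat.pos_of_ne_zero (mem_erase.1 ht).1)
  have hbox := mem_box.1 (hS.vertex_mem_box t) (S.2 0)
  have htop' := htop _ (hS.vertex_mem_box t) (S.2 0)
  have hsucc := hS.succ_lt _ ⟨0, rfl⟩
  rw [hv] at hbox htop'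
  by_contra hlt
  exact htop' (by omega) hlabel

lemma pivot_spec (htop : ∀ x ∈ box k, ∀ i, x i + 1 = k i → ℓ x ≠ (i, false))
    {q : Simplex n (p + 1) × ℕ} (hq : q ∈ doors ℓ k (p + 1)) (hb : ¬IsBoundaryDoor q) :
    pivot q ∈ doors ℓ k (p + 1) ∧ ¬IsBoundaryDoor (pivot q) ∧ pivot (pivot q) = q ∧
      pivot q ≠ q := by
  obtain ⟨S, j⟩ := q
  obtain ⟨hS, hj, hdoor⟩ := mem_doors.1 hq
  simp only [IsBoundaryDoor, not_and] at hb
  rcases (by omega : j = 0 ∨ j = p + 1 ∨ (1 ≤ j ∧ j ≤ p)) with rfl | rfl | ⟨hj1, hjp⟩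
  · rw [show pivot (S, 0) = (pivotZero S, p + 1) from if_pos rfl]
    refine ⟨mem_doors.2 ⟨hS.pivotZero (lt_of_isDoor_zero htop hS hdoor), by omega,
      (isDoor_pivotZero_iff hS.injective).2 hdoor⟩, ?_, ?_, by simp⟩
    · simp [IsBoundaryDoor, pivotZero]
    · simp [pivot, pivotLast_pivotZero]
  · have hback := pivotZero_pivotLast (hb rfl)
    rw [show pivot (S, p + 1) = (pivotLast S, 0) by simp [pivot]]
    refine ⟨mem_doors.2 ⟨hS.pivotLast, by omega, ?_⟩, by simp [IsBoundaryDoor], ?_, by simp⟩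
    · rw [← isDoor_pivotZero_iff hS.pivotLast.injective, hback]
      exact hdoor
    · simp [pivot, hback]
  · have hpiv : ∀ T : Simplex n (p + 1), pivot (T, j) = (pivotMid T j, j) := fun T => by
      simp only [pivot]
      rw [if_neg (by omega), if_neg (by omega)]
    rw [hpiv, hpiv, pivotMid_pivotMid]
    refine ⟨mem_doors.2 ⟨hS.comp_perm _, hj, (isDoor_pivotMid_iff hj1 hjp).2 hdoor⟩, ?_, rfl,
      ?_⟩
    · simp only [IsBoundaryDoor, not_and]
      omega
    · simpa using pivotMid_ne hS.injective hj1 hjp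

lemma card_doors_eq_card_boundaryDoors
    (htop : ∀ x ∈ box k, ∀ i, x i + 1 = k i → ℓ x ≠ (i, false)) (p : ℕ) :
    (#(doors ℓ k (p + 1)) : ZMod 2) = #(boundaryDoors ℓ k p) := by
  have heven : Even #{q ∈ doors ℓ k (p + 1) | ¬IsBoundaryDoor q} := by
    refine even_card_of_involution pivot (fun q hq => ?_) (fun q hq => ?_) (fun q hq => ?_) <;>
      obtain ⟨hq, hb⟩ := mem_filter.1 hq <;>
      have := pivot_spec htop hq hb
    · exact mem_filter.2 ⟨this.1, this.2.1⟩
    · exact this.2.2.1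
    · exact this.2.2.2
  rw [← card_filter_add_card_filter_not (s := doors ℓ k (p + 1)) IsBoundaryDoor, Nat.cast_add,
    ZMod.natCast_eq_zero_iff_even.2 heven, add_zero]
  rfl

lemma isDoor_last_iff {S : Simplex n (p + 1)} :
    IsDoor ℓ S (p + 1) ↔ (range (p + 1)).image (ℓ ∘ vertex (S.1, Fin.init S.2)) =
      insert (S.2 (Fin.last p), false) (doorLabels (S.1, Fin.init S.2)) := by
  have hfacet : ((range (p + 1 + 1)).erase (p + 1)).image (ℓ ∘ vertex S) =
      (range (p + 1)).image (ℓ ∘ vertex (S.1, Fin.init S.2)) := by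
    rw [range_add_one (n := p + 1), erase_insert notMem_range_self]
    exact image_congr fun t ht => by
      simp only [comp_apply, vertex_init S (Nat.le_of_lt_succ (mem_range.1 ht))]
  have hlabels :
      doorLabels S = insert (S.2 (Fin.last p), false) (doorLabels (S.1, Fin.init S.2)) := by
    ext ⟨d, b⟩
    simp only [mem_insert, mem_doorLabels, range_eq_insert_init S.2, Set.mem_insert_iff,
      Prod.mk.injEq]
    tauto
  rw [IsDoor, hfacet, hlabels]

lemma card_boundaryDoors_eq_card_fullyLabeled
    (htop : ∀ x ∈ box k, ∀ i, x i + 1 = k i → ℓ x ≠ (i, false)) (p : ℕ) :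
    #(boundaryDoors ℓ k p) = #(fullyLabeled ℓ k p) := by
  have last_notMem (S : Simplex n (p + 1)) (hS : Injective S.2) :
      (S.2 (Fin.last p), false) ∉ doorLabels (S.1, Fin.init S.2) := fun h => by
    obtain ⟨i, hi⟩ := (mem_doorLabels.1 h).1
    exact Fin.castSucc_ne_last i (hS hi)
  refine card_bij (fun q _ => (q.1.1, Fin.init q.1.2)) ?_ ?_ ?_
  · rintro ⟨S, j⟩ hq
    obtain ⟨hdoor, rfl, hzero⟩ := mem_filter.1 hq
    obtain ⟨hS, -, hdoor⟩ := mem_doors.1 hdoor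
    refine mem_filter.2 ⟨mem_kuhnSimplices.2 (hS.init hzero), S.2 (Fin.last p), ?_,
      isDoor_last_iff.1 hdoor⟩
    exact fun h => last_notMem S hS.injective (mem_doorLabels.2 ⟨h, rfl⟩)
  · rintro ⟨⟨x, σ⟩, j⟩ hq ⟨⟨x', σ'⟩, j'⟩ hq' heq
    obtain ⟨hdoor, rfl, -⟩ := mem_filter.1 hq
    obtain ⟨hdoor', rfl, -⟩ := mem_filter.1 hq'
    obtain ⟨hS, -, hdoor⟩ := mem_doors.1 hdoor
    obtain ⟨-, -, hdoor'⟩ := mem_doors.1 hdoor'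
    obtain ⟨hx, hinit⟩ := Prod.mk.inj heq
    have hlabels := (isDoor_last_iff.1 hdoor).symm.trans
      (hx ▸ hinit ▸ isDoor_last_iff.1 hdoor')
    have hlast := (Prod.mk.inj ((insert_inj (last_notMem _ hS.injective)).1 hlabels)).1
    dsimp only at hx hinit hlast
    rw [← Fin.snoc_init_self σ, ← Fin.snoc_init_self σ', hinit, hlast, hx]
  · rintro ⟨x, τ⟩ hT
    obtain ⟨hT, d, hd, hlabels⟩ := mem_filter.1 hT
    have hT := mem_kuhnSimplices.1 hT
    obtain ⟨t, -, ht⟩ := mem_image.1 (hlabels ▸ mem_insert_self _ _ :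
      (d, false) ∈ (range (p + 1)).image (ℓ ∘ vertex (x, τ)))
    have hvt : vertex (x, τ) t d = 0 := by
      rw [vertex_apply_of_notMem_range hd, hT.eq_zero d hd]
    have hk : 1 < k d := by
      have hbox := mem_box.1 (hT.vertex_mem_box t) d
      have htop' := htop _ (hT.vertex_mem_box t) d
      rw [hvt] at hbox htop'
      by_contra
      exact htop' (by omega) ht
    refine ⟨((x, Fin.snoc τ d), p + 1), mem_filter.2 ⟨mem_doors.2 ⟨hT.snoc hd hk, by omega, ?_⟩,
      rfl, by simpa using hT.eq_zero d hd⟩, by simp⟩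
    rw [isDoor_last_iff]
    simpa using hlabels

lemma card_fullyLabeled_zero (hk : ∀ i, 0 < k i)
    (hbot : ∀ x ∈ box k, ∀ i, x i = 0 → ℓ x ≠ (i, true)) : #(fullyLabeled ℓ k 0) = 1 := by
  refine card_eq_one.2 ⟨(0, Fin.elim0), eq_singleton_iff_unique_mem.2 ⟨?_, fun S hS => ?_⟩⟩
  · have hS : IsKuhnSimplex k ((0, Fin.elim0) : Simplex n 0) :=
      ⟨fun a => a.elim0, mem_box.2 hk, fun _ ⟨s, _⟩ => s.elim0, fun _ _ => rfl⟩
    have hsign : ℓ 0 = ((ℓ 0).1, false) := by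
      refine Prod.ext rfl (Bool.eq_false_iff.2 fun h => hbot 0 (mem_box.2 hk) (ℓ 0).1 rfl ?_)
      exact Prod.ext rfl h
    refine mem_filter.2 ⟨mem_kuhnSimplices.2 hS, (ℓ 0).1, fun ⟨s, _⟩ => s.elim0, ?_⟩
    simp only [zero_add, range_one, image_singleton, comp_apply, vertex_zero, doorLabels,
      univ_eq_empty, image_empty, insert_empty]
    rw [← hsign]
  · exact Prod.ext (funext fun d => (mem_kuhnSimplices.1 (mem_filter.1 hS).1).eq_zero d
      fun ⟨s, _⟩ => s.elim0) (Subsingleton.elim _ _)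

lemma fullyLabeled_eq_empty : fullyLabeled ℓ k n = ∅ :=
  filter_false_of_mem fun _ hS ⟨d, hd, _⟩ =>
    hd (Finite.injective_iff_surjective.1 (mem_kuhnSimplices.1 hS).injective d)

end Labeling

theorem exists_near_sign_change {n : ℕ} {k : Fin n → ℕ} (hk : ∀ i, 0 < k i)
    (ℓ : (Fin n → ℕ) → Fin n × Bool)
    (hbot : ∀ x ∈ box k, ∀ i, x i = 0 → ℓ x ≠ (i, true))
    (htop : ∀ x ∈ box k, ∀ i, x i + 1 = k i → ℓ x ≠ (i, false)) :
    ∃ x ∈ box k, ∃ y ∈ box k, Near x y ∧ ∃ i, ℓ x = (i, false) ∧ ℓ y = (i, true) := by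
  by_contra! hnear
  have hodd : ∀ p, (#(fullyLabeled ℓ k p) : ZMod 2) = 1 := by
    intro p
    induction p with
    | zero => rw [card_fullyLabeled_zero hk hbot, Nat.cast_one]
    | succ p ih =>
      rw [← card_doors_eq_card_fullyLabeled hbot hnear, card_doors_eq_card_boundaryDoors htop,
        card_boundaryDoors_eq_card_fullyLabeled htop, ih]
  simpa [fullyLabeled_eq_empty] using hodd n

theorem exists_adj_sign_change {n : ℕ} {k : Fin n → ℕ} (hk : ∀ i, 0 < k i)
    (ℓ : (∀ i, Fin (k i)) → Fin n × Bool)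
    (hbot : ∀ x i, (x i : ℕ) = 0 → ℓ x ≠ (i, true))
    (htop : ∀ x i, (x i : ℕ) = k i - 1 → ℓ x ≠ (i, false)) :
    ∃ x y i, adj x y ∧ ℓ x = (i, false) ∧ ℓ y = (i, true) := by
  let clamp (x : Fin n → ℕ) : ∀ i, Fin (k i) := fun i => ⟨min (x i) (k i - 1), by
    have := hk i; omega⟩
  have hclamp : ∀ x ∈ box k, ∀ i, (clamp x i : ℕ) = x i := fun x hx i => by
    have := mem_box.1 hx i
    simp only [clamp]
    omega
  obtain ⟨x, hx, y, hy, hxy, i, hxi, hyi⟩ := exists_near_sign_change hk (ℓ ∘ clamp)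
    (fun x hx i h0 => hbot _ i ((hclamp x hx i).trans h0))
    (fun x hx i htop' => htop _ i (by rw [hclamp x hx i]; omega))
  refine ⟨clamp x, clamp y, i, fun d => ?_, hxi, hyi⟩
  rw [hclamp x hx d, hclamp y hy d, abs_le]
  have := hxy d
  omega

section Chains

variable {n : ℕ} {k : Fin n → ℕ}

def ReachesTop (F : Set (∀ i, Fin (k i))) (i : Fin n) (x : ∀ i, Fin (k i)) : Prop :=
  ∃ m, ∃ c : Fin (m + 1) → ∀ j, Fin (k j), c 0 = x ∧ (∀ j, c j ∈ F) ∧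
    (c (Fin.last m) i : ℕ) = k i - 1 ∧ ∀ j : Fin m, adj (c j.castSucc) (c j.succ)

lemma reachesTop_of_mem {F : Set (∀ i, Fin (k i))} {i : Fin n} {x : ∀ i, Fin (k i)}
    (hx : x ∈ F) (hxi : (x i : ℕ) = k i - 1) : ReachesTop F i x :=
  ⟨0, fun _ => x, rfl, fun _ => hx, hxi, fun j => j.elim0⟩

lemma ReachesTop.cons {F : Set (∀ i, Fin (k i))} {i : Fin n} {x y : ∀ i, Fin (k i)}
    (hy : ReachesTop F i y) (hx : x ∈ F) (hxy : adj x y) : ReachesTop F i x := by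
  obtain ⟨m, c, rfl, hcF, hlast, hadj⟩ := hy
  refine ⟨m + 1, Fin.cons x c, rfl, Fin.cases hx hcF, by simpa [← Fin.succ_last] using hlast,
    Fin.cases (by simpa using hxy) fun j => ?_⟩
  simpa [← Fin.succ_castSucc] using hadj j

lemma ReachesTop.connects {F : Set (∀ i, Fin (k i))} {i : Fin n} {x : ∀ i, Fin (k i)}
    (h : ReachesTop F i x) (hxi : (x i : ℕ) = 0) : Connects F :=
  let ⟨m, c, hc0, hcF, hlast, hadj⟩ := h
  ⟨i, m, c, hcF, hc0 ▸ hxi, hlast, hadj⟩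

end Chains

end GaleHex

theorem gale_hex {n : ℕ} {k : Fin n → ℕ} (hk : ∀ i, 0 < k i)
    (𝓕 : Finset (Set (∀ i, Fin (k i)))) (hcard : 𝓕.card ≤ n)
    (hcov : ∀ x : ∀ i, Fin (k i), ∃ F ∈ 𝓕, x ∈ F) :
    ∃ F ∈ 𝓕, Connects F := by
  classical
  by_contra! hnone
  obtain ⟨ι⟩ : Nonempty (𝓕 ↪ Fin n) := Function.Embedding.nonempty_of_card_le (by simpa using hcard)
  choose F hF hxF using hcov
  let dir x : Fin n := ι ⟨F x, hF x⟩
  let ℓ x : Fin n × Bool := (dir x, decide (GaleHex.ReachesTop (F x) (dir x) x))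
  obtain ⟨x, y, i, hxy, hx, hy⟩ := GaleHex.exists_adj_sign_change hk ℓ
    (fun x i hxi hx => by
      simp only [ℓ, Prod.mk.injEq, decide_eq_true_eq] at hx
      exact hnone _ (hF x) (hx.1 ▸ hx.2 |>.connects (hx.1 ▸ hxi)))
    (fun x i hxi hx => by
      simp only [ℓ, Prod.mk.injEq, decide_eq_false_iff_not] at hx
      exact hx.2 (GaleHex.reachesTop_of_mem (hxF x) (hx.1 ▸ hxi)))
  simp only [ℓ, Prod.mk.injEq, decide_eq_true_eq, decide_eq_false_iff_not] at hx hy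
  have hdir : dir x = dir y := hx.1.trans hy.1.symm
  have hFxy : F x = F y := congrArg Subtype.val (ι.injective hdir)
  exact hx.2 (hdir ▸ hFxy ▸ hy.2.cons (hFxy ▸ hxF x) hxy)
end

section
/- A coarse space (X, E) has asymptotic dimension zero if and only if for every entourage E ∈ 𝓔 there exists an entourage F ∈ 𝓔 such that for any E-chain x₀,…,xₙ in X (i.e., (x_{i−1}, x_i) ∈ E for all i) one has (x₀, xₙ) ∈ F. -/
open Set

/-- An entourage: a symmetric reflexive subset of `X × X`. -/
def IsEntourage {X : Type*} (E : Set (X × X)) : Prop :=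
  (∀ x : X, (x, x) ∈ E) ∧ (∀ p ∈ E, (p.2, p.1) ∈ E)

/-- A coarse structure: a family of entourages closed under composition and
under passing to smaller entourages. -/
structure CoarseStruct (X : Type*) where
  sets : Set (Set (X × X))
  entourage : ∀ E ∈ sets, IsEntourage E
  comp : ∀ E ∈ sets, ∀ F ∈ sets,
    {p : X × X | ∃ y, (p.1, y) ∈ E ∧ (y, p.2) ∈ F} ∈ sets
  lower : ∀ E ∈ sets, ∀ F, IsEntourage F → F ⊆ E → F ∈ sets

/-- `(X, C)` has asymptotic dimension `≤ n`: for every entourage `E` there is a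
uniformly bounded cover such that every `E`-ball meets at most `n + 1` members. -/
def AsdimLE {X : Type*} (C : CoarseStruct X) (n : ℕ) : Prop :=
  ∀ E ∈ C.sets, ∃ 𝓤 : Set (Set X),
    ⋃₀ 𝓤 = univ ∧
    (∃ F ∈ C.sets, ∀ U ∈ 𝓤, ∀ x ∈ U, ∀ y ∈ U, (x, y) ∈ F) ∧
    ∀ x : X, {U ∈ 𝓤 | (U ∩ {y | (x, y) ∈ E}).Nonempty}.encard ≤ (n : ℕ∞) + 1

/-!
In a cover in which every `E`-ball (with `E` reflexive) meets only one member, each member is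
closed under `E`-steps, so every `E`-chain stays inside one member and its endpoints are
`F`-close for the `F` bounding the cover. Conversely, for a symmetric `E` the `E`-chain
components partition `X`, every `E`-ball lies in a single component, and the chain
condition says precisely that the components are uniformly bounded.
-/

open Relation

section Chains

variable {X : Type*}

theorem reflTransGen_iff_exists_fin_chain {r : X → X → Prop} {x y : X} :
    ReflTransGen r x y ↔ ∃ (m : ℕ) (c : Fin (m + 1) → X), c 0 = x ∧ c (Fin.last m) = y ∧
      ∀ j : Fin m, r (c j.castSucc) (c j.succ) := by
  constructor
  · intro h
    induction h with
    | refl => exact ⟨0, fun _ => x, rfl, rfl, Fin.elim0⟩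
    | @tail b z _ hbz ih =>
      obtain ⟨m, c, hc0, hcm, hc⟩ := ih
      refine ⟨m + 1, Fin.snoc c z, by simpa using hc0, by simp, Fin.lastCases ?_ fun i => ?_⟩
      · simpa [hcm] using hbz
      · rw [Fin.succ_castSucc, Fin.snoc_castSucc, Fin.snoc_castSucc]
        exact hc i
  · rintro ⟨m, c, rfl, rfl, hc⟩
    have hreach : ∀ j : Fin (m + 1), ReflTransGen r (c 0) (c j) :=
      Fin.induction .refl fun i ih => ih.tail (hc i)
    exact hreach (Fin.last m)

theorem forall_reflTransGen_iff_forall_fin_chain {r p : X → X → Prop} :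
    (∀ x y, ReflTransGen r x y → p x y) ↔
      ∀ (m : ℕ) (c : Fin (m + 1) → X), (∀ j : Fin m, r (c j.castSucc) (c j.succ)) →
        p (c 0) (c (Fin.last m)) := by
  simp only [reflTransGen_iff_exists_fin_chain]
  exact ⟨fun h m c hc => h _ _ ⟨m, c, rfl, rfl, hc⟩,
    fun h x y ⟨m, c, hc0, hcm, hc⟩ => hc0 ▸ hcm ▸ h m c hc⟩

end Chains

section Components

variable {X : Type*} {E : Set (X × X)}

def IsEntourage.chainSetoid (hE : IsEntourage E) : Setoid X where
  r := ReflTransGen fun x y => (x, y) ∈ E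
  iseqv :=
    have : Std.Symm fun x y => (x, y) ∈ E := ⟨fun x y => hE.2 (x, y)⟩
    ⟨fun _ => .refl, fun h => Std.Symm.symm _ _ h, .trans⟩

theorem IsEntourage.encard_chainSetoid_classes_meeting_ball_le_one (hE : IsEntourage E)
    (x : X) : {U ∈ hE.chainSetoid.classes | (U ∩ {y | (x, y) ∈ E}).Nonempty}.encard ≤ 1 := by
  have mem_of_meets :
      ∀ U ∈ hE.chainSetoid.classes, (U ∩ {y | (x, y) ∈ E}).Nonempty → x ∈ U := by
    rintro _ ⟨a, rfl⟩ ⟨y, hya, hxy⟩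
    exact hE.chainSetoid.trans (.single hxy) hya
  refine encard_le_one_iff.2 fun U V ⟨hU, hUx⟩ ⟨hV, hVx⟩ => ?_
  exact Setoid.eq_of_mem_classes hU (mem_of_meets U hU hUx) hV (mem_of_meets V hV hVx)

theorem mem_of_reflTransGen_of_encard_le_one {𝓤 : Set (Set X)} (hrefl : ∀ x, (x, x) ∈ E)
    (hcov : ⋃₀ 𝓤 = univ)
    (hmult : ∀ x, {U ∈ 𝓤 | (U ∩ {y | (x, y) ∈ E}).Nonempty}.encard ≤ 1)
    {U : Set X} (hU : U ∈ 𝓤) {x y : X} (hx : x ∈ U)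
    (hxy : ReflTransGen (fun a b => (a, b) ∈ E) x y) : y ∈ U := by
  induction hxy with
  | refl => exact hx
  | @tail b z _ hbz hb =>
    obtain ⟨V, hV, hzV⟩ := mem_sUnion.1 (hcov ▸ mem_univ z)
    have hUV : U = V := encard_le_one_iff.1 (hmult b) U V ⟨hU, b, hb, hrefl b⟩ ⟨hV, z, hzV, hbz⟩
    exact hUV ▸ hzV

end Components

theorem asdimLE_zero_iff_reflTransGen_bounded {X : Type*} (C : CoarseStruct X) :
    AsdimLE C 0 ↔ ∀ E ∈ C.sets, ∃ F ∈ C.sets,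
      ∀ x y, ReflTransGen (fun a b => (a, b) ∈ E) x y → (x, y) ∈ F := by
  simp only [AsdimLE, Nat.cast_zero, zero_add]
  constructor
  · intro h E hE
    obtain ⟨𝓤, hcov, ⟨F, hF, hFbdd⟩, hmult⟩ := h E hE
    refine ⟨F, hF, fun x y hxy => ?_⟩
    obtain ⟨U, hU, hxU⟩ := mem_sUnion.1 (hcov ▸ mem_univ x)
    exact hFbdd U hU x hxU y
      (mem_of_reflTransGen_of_encard_le_one (C.entourage E hE).1 hcov hmult hU hxU hxy)
  · intro h E hE
    obtain ⟨F, hF, hFbdd⟩ := h E hE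
    have hEnt := C.entourage E hE
    refine ⟨hEnt.chainSetoid.classes, hEnt.chainSetoid.sUnion_classes, ⟨F, hF, ?_⟩,
      hEnt.encard_chainSetoid_classes_meeting_ball_le_one⟩
    rintro _ ⟨a, rfl⟩ x hx y hy
    exact hFbdd x y (hEnt.chainSetoid.trans hx (hEnt.chainSetoid.symm hy))

theorem asdim_zero_iff_chains {X : Type*} (C : CoarseStruct X) :
    AsdimLE C 0 ↔
    ∀ E ∈ C.sets, ∃ F ∈ C.sets, ∀ (m : ℕ) (c : Fin (m + 1) → X),
      (∀ j : Fin m, (c (j.castSucc), c (j.succ)) ∈ E) →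
      (c 0, c (Fin.last m)) ∈ F := by
  simp only [asdimLE_zero_iff_reflTransGen_bounded,
    forall_reflTransGen_iff_forall_fin_chain (p := fun x y => (x, y) ∈ _)]
end

section
/- If a coarse space (X, 𝓔) has asymptotic dimension zero, then for every entourage E ∈ 𝓔 there exists an entourage F ∈ 𝓔 such that every E-chain-connected subset C ⊆ X satisfies C × C ⊆ F. -/
open Set

theorem asdim_zero_chain_connected {X : Type*} (C : CoarseStruct X)
    (h : AsdimLE C 0) :
    ∀ E ∈ C.sets, ∃ F ∈ C.sets, ∀ S : Set X,
      (∀ u ∈ S, ∀ v ∈ S, ∃ m : ℕ, ∃ c : Fin (m + 1) → X,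
        (∀ j, c j ∈ S) ∧ c 0 = u ∧ c (Fin.last m) = v ∧
        ∀ j : Fin m, (c (j.castSucc), c (j.succ)) ∈ E) →
      ∀ u ∈ S, ∀ v ∈ S, (u, v) ∈ F := by

  intro E hE
  obtain ⟨𝓤, hcov, ⟨F, hF, hFb⟩, hmult⟩ := h E hE
  refine ⟨F, hF, ?_⟩
  intro S hchain u hu v hv
  obtain ⟨m, c, hcS, hc0, hcl, hstep⟩ := hchain u hu v hv
  have hrefl := (C.entourage E hE).1
  -- each x lies in some member of the cover
  have hmem : ∀ x : X, ∃ U ∈ 𝓤, x ∈ U := by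
    intro x
    have : x ∈ ⋃₀ 𝓤 := by rw [hcov]; trivial
    simpa using this
  -- uniqueness: at most one member meets each E-ball
  have huniq : ∀ x : X, ∀ U ∈ 𝓤, ∀ V ∈ 𝓤,
      (U ∩ {y | (x, y) ∈ E}).Nonempty → (V ∩ {y | (x, y) ∈ E}).Nonempty → U = V := by
    intro x U hU V hV h1 h2
    have hcard := hmult x
    simp only [Nat.cast_zero, zero_add] at hcard
    rw [Set.encard_le_one_iff] at hcard
    exact hcard U V ⟨hU, h1⟩ ⟨hV, h2⟩
  obtain ⟨U, hU, hu0⟩ := hmem (c 0)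
  have hall : ∀ j : Fin (m + 1), c j ∈ U := by
    intro j
    induction j using Fin.induction with
    | zero => exact hu0
    | succ i ih =>
      obtain ⟨V, hV, hvV⟩ := hmem (c i.succ)
      have h1 : (U ∩ {y | (c i.castSucc, y) ∈ E}).Nonempty :=
        ⟨c i.castSucc, ih, hrefl _⟩
      have h2 : (V ∩ {y | (c i.castSucc, y) ∈ E}).Nonempty :=
        ⟨c i.succ, hvV, hstep i⟩
      have := huniq (c i.castSucc) U hU V hV h1 h2
      rw [this]; exact hvV
  have h1 : u ∈ U := hc0 ▸ hall 0
  have h2 : v ∈ U := hcl ▸ hall (Fin.last m)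
  exact hFb U hU u h1 v h2
end

section
/- Let F be a cover of a discrete box K of dimension n such that every subset of K of diameter ≤ 1 meets at most n elements of F, and let U be the refinement of F into E-chain-components (where E relates points at distance ≤ 1). Then for every point x of the continuous box K̃ = ∏ᵢ[0,kᵢ−1], at most n members U ∈ U satisfy d̃(x, U) ≤ 1/2. -/
/-- The `E`-chain component of `x` inside `F`: all `y ∈ F` reachable from `x`
by a chain in `F` with consecutive pairs in `E`. -/
def EClass {X : Type*} (E : Set (X × X)) (F : Set X) (x : X) : Set X :=
  {y | y ∈ F ∧ ∃ m : ℕ, ∃ c : Fin (m + 1) → X, (∀ j, c j ∈ F) ∧ c 0 = x ∧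
    c (Fin.last m) = y ∧ ∀ j : Fin m, (c (j.castSucc), c (j.succ)) ∈ E}

open Set

/-!
The lattice points within sup-distance `1/2` of `x` are pairwise at distance `≤ 1`, so they form
a set `B` of diameter `≤ 1`. Inside a single `F ∈ 𝓕` all points of `F ∩ B` are then joined by
one-step chains, so at most one chain component of `F` meets `B`. Hence the components meeting
`B` are no more numerous than the members of `𝓕` meeting `B`, of which there are at most `n`.
-/

namespace Relation

variable {α : Type*} {r : α → α → Prop} {a b : α}

theorem reflTransGen_iff_exists_fin_chain :
    ReflTransGen r a b ↔ ∃ m : ℕ, ∃ c : Fin (m + 1) → α, c 0 = a ∧ c (Fin.last m) = b ∧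
      ∀ j : Fin m, r (c j.castSucc) (c j.succ) := by
  constructor
  · intro h
    induction h with
    | refl => exact ⟨0, fun _ => a, rfl, rfl, fun j => j.elim0⟩
    | @tail b d _ hbd ih =>
      obtain ⟨m, c, h0, hlast, hstep⟩ := ih
      refine ⟨m + 1, Fin.snoc c d, ?_, by simp, fun j => ?_⟩
      · simpa using h0
      · induction j using Fin.lastCases with
        | last => simpa [hlast] using hbd
        | cast j => rw [Fin.succ_castSucc, Fin.snoc_castSucc, Fin.snoc_castSucc]; exact hstep j
  · rintro ⟨m, c, rfl, rfl, hstep⟩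
    exact Fin.induction .refl (fun j ih => ih.tail (hstep j)) (Fin.last m)

end Relation

section EClass

variable {X : Type*} {E : Set (X × X)} {F : Set X} {x y : X}

def EStep (E : Set (X × X)) (F : Set X) (p q : X) : Prop :=
  p ∈ F ∧ q ∈ F ∧ (p, q) ∈ E

theorem mem_eClass_iff : y ∈ EClass E F x ↔ x ∈ F ∧ Relation.ReflTransGen (EStep E F) x y := by
  rw [Relation.reflTransGen_iff_exists_fin_chain]
  constructor
  · rintro ⟨-, m, c, hc, h0, hlast, hstep⟩
    exact ⟨h0 ▸ hc 0, m, c, h0, hlast, fun j => ⟨hc _, hc _, hstep j⟩⟩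
  · rintro ⟨hx, m, c, h0, hlast, hstep⟩
    have hc : ∀ j, c j ∈ F := Fin.cases (h0 ▸ hx) fun j => (hstep j).2.1
    exact ⟨hlast ▸ hc _, m, c, hc, h0, hlast, fun j => (hstep j).2.2⟩

theorem mem_eClass_of_mem (hx : x ∈ F) (hy : y ∈ F) (hxy : (x, y) ∈ E) : y ∈ EClass E F x :=
  mem_eClass_iff.2 ⟨hx, .single ⟨hx, hy, hxy⟩⟩

theorem eClass_eq_of_mem (hE : ∀ p q, (p, q) ∈ E → (q, p) ∈ E) (hy : y ∈ EClass E F x) :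
    EClass E F y = EClass E F x := by
  have : Std.Symm (EStep E F) := ⟨fun _ _ h => ⟨h.2.1, h.1, hE _ _ h.2.2⟩⟩
  obtain ⟨hx, hxy⟩ := mem_eClass_iff.1 hy
  ext z
  simp only [mem_eClass_iff]
  exact ⟨fun ⟨_, hyz⟩ => ⟨hx, hxy.trans hyz⟩, fun ⟨_, hxz⟩ => ⟨hy.1, (symm hxy).trans hxz⟩⟩

theorem encard_eClasses_meeting_le (hE : ∀ p q, (p, q) ∈ E → (q, p) ∈ E) (𝓕 : Set (Set X))
    {B : Set X} (hB : ∀ u ∈ B, ∀ v ∈ B, (u, v) ∈ E) :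
    {U | (∃ F ∈ 𝓕, ∃ a ∈ F, U = EClass E F a) ∧ ∃ u ∈ U, u ∈ B}.encard ≤
      {F ∈ 𝓕 | (F ∩ B).Nonempty}.encard := by
  classical
  let component : Set X → Set X := fun F =>
    if h : (F ∩ B).Nonempty then EClass E F h.some else ∅
  refine (encard_mono ?_).trans (encard_image_le component _)
  rintro U ⟨⟨F, hF, a, -, rfl⟩, u, hu, huB⟩
  have hFB : (F ∩ B).Nonempty := ⟨u, hu.1, huB⟩
  obtain ⟨hbF, hbB⟩ := hFB.some_mem
  refine ⟨F, ⟨hF, hFB⟩, ?_⟩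
  calc component F = EClass E F hFB.some := dif_pos hFB
    _ = EClass E F u := eClass_eq_of_mem hE (mem_eClass_of_mem hu.1 hbF (hB u huB _ hbB))
    _ = EClass E F a := eClass_eq_of_mem hE hu

end EClass

theorem adj_symm {n : ℕ} {k : Fin n → ℕ} {u v : ∀ i, Fin (k i)} (h : adj u v) : adj v u :=
  fun i => abs_sub_comm (v i : ℤ) (u i) ▸ h i

theorem adj_of_abs_sub_le_half {n : ℕ} {k : Fin n → ℕ} {x : Fin n → ℝ} {u v : ∀ i, Fin (k i)}
    (hu : ∀ i, |x i - u i| ≤ 1 / 2) (hv : ∀ i, |x i - v i| ≤ 1 / 2) : adj u v := by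
  intro i
  have h : |((u i : ℤ) : ℝ) - ((v i : ℤ) : ℝ)| ≤ 1 := by
    push_cast
    calc |(u i : ℝ) - v i| ≤ |(u i : ℝ) - x i| + |x i - v i| := abs_sub_le _ _ _
      _ ≤ 1 / 2 + 1 / 2 := add_le_add ((abs_sub_comm _ _).trans_le (hu i)) (hv i)
      _ = 1 := by norm_num
  exact_mod_cast h

theorem chain_components_multiplicity_general {n : ℕ} {k : Fin n → ℕ}
    (𝓕 : Set (Set (∀ i, Fin (k i))))
    (hloc : ∀ B : Set (∀ i, Fin (k i)), (∀ x ∈ B, ∀ y ∈ B, adj x y) →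
      {F ∈ 𝓕 | (F ∩ B).Nonempty}.encard ≤ (n : ℕ∞))
    (x : Fin n → ℝ) :
    {U : Set (∀ i, Fin (k i)) |
        (∃ F ∈ 𝓕, ∃ a ∈ F, U = EClass {p | adj p.1 p.2} F a) ∧
        ∃ u ∈ U, ∀ i, |x i - (u i : ℝ)| ≤ 1 / 2}.encard ≤ (n : ℕ∞) := by
  let B : Set (∀ i, Fin (k i)) := {u | ∀ i, |x i - (u i : ℝ)| ≤ 1 / 2}
  have hB : ∀ u ∈ B, ∀ v ∈ B, adj u v := fun _ hu _ hv => adj_of_abs_sub_le_half hu hv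
  exact (encard_eClasses_meeting_le (fun _ _ => adj_symm) 𝓕 hB).trans (hloc B hB)

theorem chain_components_multiplicity {n : ℕ} {k : Fin n → ℕ} (hk : ∀ i, 0 < k i)
    (𝓕 : Set (Set (∀ i, Fin (k i)))) (hcov : ⋃₀ 𝓕 = univ)
    (hloc : ∀ B : Set (∀ i, Fin (k i)), (∀ x ∈ B, ∀ y ∈ B, adj x y) →
      {F ∈ 𝓕 | (F ∩ B).Nonempty}.encard ≤ (n : ℕ∞))
    (x : Fin n → ℝ) (hx : ∀ i, x i ∈ Icc (0 : ℝ) ((k i : ℝ) - 1)) :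
    {U : Set (∀ i, Fin (k i)) |
        (∃ F ∈ 𝓕, ∃ a ∈ F, U = EClass {p | adj p.1 p.2} F a) ∧
        ∃ u ∈ U, ∀ i, |x i - (u i : ℝ)| ≤ 1 / 2}.encard ≤ (n : ℕ∞) :=
  chain_components_multiplicity_general 𝓕 hloc x
end
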